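/- Let s ∈ (1/2, 1] and let G_s = F_s·F_s'. Then there exists a constant k_s > 0 such that for every t ∈ ℝ with |t| ≤ 1, |G_s(t)| ≤ k_s·F_s(t)^{2 − 1/s}. -/

import Mathlib

/-!
On `(0, 1]` we have `F_s(t) = (3/8) t^{s+1/2} q(t)` with `q(t) = t² − (10/3)t + 5 ∈ [8/3, 5]`,
so `t^{s+1/2} ≤ F_s(t) ≤ 2 t^{s+1/2}` and `|F_s'(t)| ≤ 3(s+1) t^{s-1/2}` (at `t = 1` the closed
form and `t^s` both have derivative `s`); hence `|F_s F_s'| ≤ 6(s+1) t^{2s}`. Since `2 − 1/s ≥ 0`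
and `(s + 1/2)(2 − 1/s) = 2s − 1/(2s) ≤ 2s`, we get `t^{2s} ≤ t^{(s+1/2)(2−1/s)} ≤ F_s(t)^{2−1/s}`.
Negative `t` follow because `F_s` is even.
-/

noncomputable def theta (t : ℝ) : ℝ :=
  if |t| ≤ 1 then (3 / 8) * |t| ^ ((1 : ℝ) / 2) * (|t| ^ 2 - (10 / 3) * |t| + 5) else 1

noncomputable def Fs (s t : ℝ) : ℝ := theta t * |t| ^ s

open Real Set Filter

noncomputable def Fs₀ (s x : ℝ) : ℝ := 3 / 8 * x ^ (s + 1 / 2) * (x ^ 2 - 10 / 3 * x + 5)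

noncomputable def Fs₀Deriv (s x : ℝ) : ℝ :=
  3 / 8 * x ^ (s - 1 / 2) * ((s + 1 / 2) * (x ^ 2 - 10 / 3 * x + 5) + x * (2 * x - 10 / 3))

variable {s x : ℝ}

lemma Fs_eq_Fs₀ (hx : x ∈ Ioc 0 1) : Fs s x = Fs₀ s x := by
  rw [Fs, Fs₀, theta, abs_of_pos hx.1, if_pos hx.2, rpow_add hx.1]
  ring

lemma Fs_eq_rpow (hx : 1 ≤ x) : Fs s x = x ^ s := by
  rcases hx.eq_or_lt with rfl | hx
  · norm_num [Fs, theta]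
  · rw [Fs, theta, abs_of_pos (one_pos.trans hx), if_neg hx.not_ge, one_mul]

lemma Fs_neg (s x : ℝ) : Fs s (-x) = Fs s x := by
  simp only [Fs, theta, abs_neg]

lemma deriv_Fs_neg (s x : ℝ) : deriv (Fs s) (-x) = -deriv (Fs s) x := by
  have h := deriv_comp_neg (f := Fs s) (-x)
  simp only [Fs_neg, neg_neg] at h
  exact h

lemma hasDerivAt_Fs₀ (hx : 0 < x) : HasDerivAt (Fs₀ s) (Fs₀Deriv s x) x := by
  have hpow : HasDerivAt (fun y : ℝ => y ^ (s + 1 / 2)) ((s + 1 / 2) * x ^ (s - 1 / 2)) x := by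
    convert hasDerivAt_rpow_const (p := s + 1 / 2) (Or.inl hx.ne') using 3
    ring
  have hq : HasDerivAt (fun y : ℝ => y ^ 2 - 10 / 3 * y + 5) (2 * x - 10 / 3) x := by
    simpa using ((hasDerivAt_pow 2 x).sub ((hasDerivAt_id x).const_mul (10 / 3))).add_const 5
  have hsplit : x ^ (s + 1 / 2) = x ^ (s - 1 / 2) * x := by
    rw [← rpow_add_one hx.ne']
    ring_nf
  refine ((hpow.const_mul (3 / 8)).mul hq).congr_deriv ?_
  rw [Fs₀Deriv, hsplit]
  ring

lemma Fs₀Deriv_one (s : ℝ) : Fs₀Deriv s 1 = s := by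
  norm_num [Fs₀Deriv]
  ring

lemma hasDerivAt_Fs_one : HasDerivAt (Fs s) s 1 := by
  have hleft : HasDerivWithinAt (Fs s) s (Iic 1) 1 := by
    have h := ((hasDerivAt_Fs₀ (s := s) one_pos).hasDerivWithinAt (s := Ioc 0 1)).congr
      (fun _ hy => Fs_eq_Fs₀ hy) (Fs_eq_Fs₀ ⟨one_pos, le_rfl⟩)
    rw [Fs₀Deriv_one] at h
    exact h.mono_of_mem_nhdsWithin (Ioc_mem_nhdsLE one_pos)
  have hright : HasDerivWithinAt (Fs s) s (Ici 1) 1 := by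
    have h := (hasDerivAt_rpow_const (x := 1) (p := s) (Or.inl one_ne_zero)).hasDerivWithinAt
      (s := Ici 1)
    rw [one_rpow, mul_one] at h
    exact h.congr (fun _ hy => Fs_eq_rpow hy) (Fs_eq_rpow le_rfl)
  simpa only [Iic_union_Ici, hasDerivWithinAt_univ] using hleft.union hright

lemma hasDerivAt_Fs (hx : x ∈ Ioc 0 1) : HasDerivAt (Fs s) (Fs₀Deriv s x) x := by
  rcases hx.2.eq_or_lt with rfl | hx1
  · rw [Fs₀Deriv_one]
    exact hasDerivAt_Fs_one
  · refine (hasDerivAt_Fs₀ hx.1).congr_of_eventuallyEq ?_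
    filter_upwards [Ioo_mem_nhds hx.1 hx1] with y hy
    exact Fs_eq_Fs₀ (Ioo_subset_Ioc_self hy)

lemma quadratic_mem_Icc (hx : x ∈ Icc (0 : ℝ) 1) : x ^ 2 - 10 / 3 * x + 5 ∈ Icc (8 / 3 : ℝ) 5 := by
  obtain ⟨h0, h1⟩ := hx
  constructor <;> nlinarith

lemma rpow_le_Fs₀ (hx : x ∈ Ioc 0 1) : x ^ (s + 1 / 2) ≤ Fs₀ s x := by
  have hq := (quadratic_mem_Icc (Ioc_subset_Icc_self hx)).1
  have hpos := rpow_pos_of_pos hx.1 (s + 1 / 2)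
  rw [Fs₀]
  nlinarith

lemma Fs₀_le (hx : x ∈ Ioc 0 1) : Fs₀ s x ≤ 2 * x ^ (s + 1 / 2) := by
  have hq := (quadratic_mem_Icc (Ioc_subset_Icc_self hx)).2
  have hpos := rpow_pos_of_pos hx.1 (s + 1 / 2)
  rw [Fs₀]
  nlinarith

lemma abs_Fs₀Deriv_le (hs : 0 ≤ s + 1 / 2) (hx : x ∈ Ioc 0 1) :
    |Fs₀Deriv s x| ≤ 3 * (s + 1) * x ^ (s - 1 / 2) := by
  obtain ⟨hq0, hq1⟩ := quadratic_mem_Icc (Ioc_subset_Icc_self hx)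
  have hpos := rpow_pos_of_pos hx.1 (s - 1 / 2)
  have hbracket : |(s + 1 / 2) * (x ^ 2 - 10 / 3 * x + 5) + x * (2 * x - 10 / 3)| ≤ 8 * (s + 1) := by
    obtain ⟨hx0, hx1⟩ := hx
    rw [abs_le]
    constructor <;> nlinarith
  rw [Fs₀Deriv, abs_mul, abs_of_pos (by positivity : (0 : ℝ) < 3 / 8 * x ^ (s - 1 / 2))]
  nlinarith

lemma rpow_two_mul_le_Fs_rpow (hs : 1 / 2 ≤ s) (hx : x ∈ Ioc 0 1) :
    x ^ (2 * s) ≤ Fs s x ^ (2 - 1 / s) := by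
  have hs0 : 0 < s := by linarith
  have hexp : 0 ≤ 2 - 1 / s := by
    rw [sub_nonneg, div_le_iff₀ hs0]
    linarith
  calc x ^ (2 * s) ≤ x ^ ((s + 1 / 2) * (2 - 1 / s)) := by
        refine rpow_le_rpow_of_exponent_ge hx.1 hx.2 ?_
        have : (s + 1 / 2) * (2 - 1 / s) = 2 * s - 1 / (2 * s) := by field_simp; ring
        rw [this]
        have : 0 < 1 / (2 * s) := by positivity
        linarith
    _ = (x ^ (s + 1 / 2)) ^ (2 - 1 / s) := rpow_mul hx.1.le _ _
    _ ≤ Fs s x ^ (2 - 1 / s) := by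
        rw [Fs_eq_Fs₀ hx]
        exact rpow_le_rpow (rpow_pos_of_pos hx.1 _).le (rpow_le_Fs₀ hx) hexp

lemma abs_Fs_mul_deriv_le (hs : 1 / 2 ≤ s) (hx : x ∈ Ioc 0 1) :
    |Fs s x * deriv (Fs s) x| ≤ 6 * (s + 1) * Fs s x ^ (2 - 1 / s) := by
  have hFs : 0 ≤ Fs s x := (rpow_pos_of_pos hx.1 _).le.trans (Fs_eq_Fs₀ hx ▸ rpow_le_Fs₀ hx)
  have hderiv := (hasDerivAt_Fs (s := s) hx).deriv ▸ abs_Fs₀Deriv_le (by linarith) hx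
  have hprod : x ^ (s + 1 / 2) * x ^ (s - 1 / 2) = x ^ (2 * s) := by
    rw [← rpow_add hx.1]
    ring_nf
  calc |Fs s x * deriv (Fs s) x| = Fs s x * |deriv (Fs s) x| := by rw [abs_mul, abs_of_nonneg hFs]
    _ ≤ (2 * x ^ (s + 1 / 2)) * (3 * (s + 1) * x ^ (s - 1 / 2)) :=
        mul_le_mul (Fs_eq_Fs₀ hx ▸ Fs₀_le hx) hderiv (abs_nonneg _)
          (mul_nonneg (by linarith) (rpow_pos_of_pos hx.1 _).le)
    _ = 6 * (s + 1) * x ^ (2 * s) := by rw [← hprod]; ring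
    _ ≤ 6 * (s + 1) * Fs s x ^ (2 - 1 / s) :=
        mul_le_mul_of_nonneg_left (rpow_two_mul_le_Fs_rpow hs hx) (by linarith)

theorem stmt_16_general (s : ℝ) (hs1 : 1 / 2 < s) :
    ∃ ks : ℝ, 0 < ks ∧ ∀ t : ℝ, |t| ≤ 1 →
      |Fs s t * deriv (Fs s) t| ≤ ks * Fs s t ^ (2 - 1 / s) := by
  refine ⟨6 * (s + 1), by linarith, fun t ht => ?_⟩
  rcases lt_trichotomy t 0 with hneg | rfl | hpos
  · have h := abs_Fs_mul_deriv_le (s := s) hs1.le ⟨neg_pos.2 hneg, (abs_of_neg hneg) ▸ ht⟩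
    rwa [Fs_neg, deriv_Fs_neg, mul_neg, abs_neg] at h
  · have hF : Fs s 0 = 0 := by simp [Fs, zero_rpow (by linarith : s ≠ 0)]
    rw [hF, zero_mul, abs_zero]
    exact mul_nonneg (by linarith) (rpow_nonneg le_rfl _)
  · exact abs_Fs_mul_deriv_le hs1.le ⟨hpos, (abs_of_pos hpos) ▸ ht⟩

/-- For `s ∈ (1/2, 1]` and `G_s = F_s · F_s'`, there is `k_s > 0` such that
`|G_s(t)| ≤ k_s · F_s(t)^{2 − 1/s}` whenever `|t| ≤ 1`. -/
theorem stmt_16 (s : ℝ) (hs1 : 1 / 2 < s) (hs2 : s ≤ 1) :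
    ∃ ks : ℝ, 0 < ks ∧ ∀ t : ℝ, |t| ≤ 1 →
      |Fs s t * deriv (Fs s) t| ≤ ks * Fs s t ^ (2 - 1 / s) :=
  stmt_16_general s hs1
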